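/- Let F(t,x) = (t, f_t(x)) be a real analytic family defined on a neighborhood of 0 in ℝ × ℝⁿ with values in ℝ × ℝᵖ, with f_t(0) = 0 for all t, and suppose f₀ has isolated singularity at 0. Suppose there exist C > 0, ε₁ > 0 and β > 0 such that ‖∇(‖f₀‖²)(x)‖ ≥ C‖x‖^β for all ‖x‖ < ε₁. Let k ≥ ⌊β⌋ + 1 and suppose each component of (t,x) ↦ f_t(x) − f₀(x) can be written as Σ_{|γ| = k} x^γ H_γ(t,x) with H_γ real analytic. Then there exist δ > 0 and ε' > 0 such that for every |t| < δ, the only critical point of the function x ↦ ‖f_t(x)‖² in the ball {‖x‖ < ε'} is x = 0; in particular there exists ε₀ > 0 such that every ε with 0 < ε ≤ ε₀ is a regular value of ‖f_t‖² restricted to that ball, for all |t| < δ. -/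

import Mathlib

/-! Write `g_t = ‖f_t‖²`. Expanding `f_t - f₀` in monomials of degree `k` gives, uniformly for
small `t`, `‖f_t x - f₀ x‖ = O(‖x‖ ^ k)` and `‖D(f_t - f₀) x‖ = O(‖x‖ ^ (k - 1))`; together with
`‖f₀ x‖ = O(‖x‖)` this yields `‖Dg_t x - Dg₀ x‖ = O(‖x‖ ^ k)`. Since `k > β`, this is eventually
smaller than the Łojasiewicz bound `C ‖x‖ ^ β ≤ ‖Dg₀ x‖`, so `Dg_t x ≠ 0` for small `x ≠ 0`,
while `x = 0` lies on the level `0` only. -/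

open Metric Set Filter Topology

section Monomial

variable {ι : Type*} [Fintype ι]

lemma EuclideanSpace.norm_proj_le_one (i : ι) : ‖EuclideanSpace.proj (𝕜 := ℝ) i‖ ≤ 1 :=
  ContinuousLinearMap.opNorm_le_bound _ zero_le_one fun x => by
    simpa using PiLp.norm_apply_le x i

lemma abs_prod_pow_le_norm_pow (x : EuclideanSpace ℝ ι) (γ : ι → ℕ) (s : Finset ι) :
    |∏ i ∈ s, x i ^ γ i| ≤ ‖x‖ ^ ∑ i ∈ s, γ i := by
  rw [← Finset.prod_pow_eq_pow_sum, Finset.abs_prod]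
  gcongr with i
  rw [abs_pow]
  exact pow_le_pow_left₀ (abs_nonneg _) (PiLp.norm_apply_le x i) _

lemma exists_hasFDerivAt_prod_pow (x : EuclideanSpace ℝ ι) (γ : ι → ℕ) :
    ∃ D : EuclideanSpace ℝ ι →L[ℝ] ℝ, HasFDerivAt (fun y => ∏ i, y i ^ γ i) D x ∧
      ‖D‖ ≤ (∑ i, γ i : ℕ) * ‖x‖ ^ (∑ i, γ i - 1) := by
  classical
  let g' (i : ι) : EuclideanSpace ℝ ι →L[ℝ] ℝ :=
    ((γ i : ℝ) * x i ^ (γ i - 1)) • EuclideanSpace.proj i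
  have hg' (i : ι) : HasFDerivAt (fun y : EuclideanSpace ℝ ι => y i ^ γ i) (g' i) x :=
    (hasDerivAt_pow (γ i) (x i)).comp_hasFDerivAt x (EuclideanSpace.proj (𝕜 := ℝ) i).hasFDerivAt
  refine ⟨_, HasFDerivAt.finsetProd fun i _ => hg' i, ?_⟩
  have hterm (i : ι) : ‖(∏ j ∈ Finset.univ.erase i, x j ^ γ j) • g' i‖ ≤
      γ i * ‖x‖ ^ (∑ i, γ i - 1) := by
    have hsum := Finset.add_sum_erase Finset.univ γ (Finset.mem_univ i)
    have hg'_norm : ‖g' i‖ ≤ γ i * ‖x‖ ^ (γ i - 1) * 1 := by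
      refine (ContinuousLinearMap.opNorm_smul_le _ _).trans ?_
      rw [norm_mul, norm_pow, Real.norm_natCast]
      gcongr
      · exact PiLp.norm_apply_le x i
      · exact EuclideanSpace.norm_proj_le_one i
    calc ‖(∏ j ∈ Finset.univ.erase i, x j ^ γ j) • g' i‖
        ≤ ‖∏ j ∈ Finset.univ.erase i, x j ^ γ j‖ * ‖g' i‖ := ContinuousLinearMap.opNorm_smul_le _ _
      _ ≤ ‖x‖ ^ (∑ j ∈ Finset.univ.erase i, γ j) * (γ i * ‖x‖ ^ (γ i - 1) * 1) := by
          gcongr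
          exact abs_prod_pow_le_norm_pow x γ _
      _ = γ i * ‖x‖ ^ (∑ i, γ i - 1) := by
          rcases Nat.eq_zero_or_pos (γ i) with h | h
          · simp [h]
          · rw [mul_one, mul_left_comm, ← pow_add]
            congr 2
            omega
  calc _ ≤ ∑ i, ‖(∏ j ∈ Finset.univ.erase i, x j ^ γ j) • g' i‖ := norm_sum_le _ _
    _ ≤ ∑ i, γ i * ‖x‖ ^ (∑ i, γ i - 1) := Finset.sum_le_sum fun i _ => hterm i
    _ = _ := by rw [← Finset.sum_mul, Nat.cast_sum]

variable {F : Type*} [NormedAddCommGroup F] [NormedSpace ℝ F]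

lemma norm_sum_prod_pow_smul_le {S : Finset (ι → ℕ)} {k : ℕ} (hS : ∀ γ ∈ S, ∑ i, γ i = k)
    (x : EuclideanSpace ℝ ι) (v : (ι → ℕ) → F) {b : ℝ} (hv : ∀ γ ∈ S, ‖v γ‖ ≤ b) :
    ‖∑ γ ∈ S, (∏ i, x i ^ γ i) • v γ‖ ≤ S.card * b * ‖x‖ ^ k := by
  calc _ ≤ ∑ γ ∈ S, ‖(∏ i, x i ^ γ i) • v γ‖ := norm_sum_le _ _
    _ ≤ ∑ γ ∈ S, b * ‖x‖ ^ k := Finset.sum_le_sum fun γ hγ => by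
        rw [norm_smul, mul_comm, Real.norm_eq_abs, ← hS γ hγ]
        exact mul_le_mul (hv γ hγ) (abs_prod_pow_le_norm_pow x γ _) (abs_nonneg _)
          ((norm_nonneg _).trans (hv γ hγ))
    _ = _ := by rw [Finset.sum_const, nsmul_eq_mul, mul_assoc]

lemma norm_fderiv_sum_prod_pow_smul_le {S : Finset (ι → ℕ)} {k : ℕ} (hk : 1 ≤ k)
    (hS : ∀ γ ∈ S, ∑ i, γ i = k) {h : (ι → ℕ) → EuclideanSpace ℝ ι → F}
    {x : EuclideanSpace ℝ ι} {b : ℝ} (hd : ∀ γ ∈ S, DifferentiableAt ℝ (h γ) x)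
    (hb : ∀ γ ∈ S, ‖h γ x‖ ≤ b ∧ ‖fderiv ℝ (h γ) x‖ ≤ b) :
    ‖fderiv ℝ (fun y => ∑ γ ∈ S, (∏ i, y i ^ γ i) • h γ y) x‖ ≤
      S.card * b * (‖x‖ + k) * ‖x‖ ^ (k - 1) := by
  choose D hD hDnorm using fun γ => exists_hasFDerivAt_prod_pow x γ
  have hsum : HasFDerivAt (fun y => ∑ γ ∈ S, (∏ i, y i ^ γ i) • h γ y)
      (∑ γ ∈ S, ((∏ i, x i ^ γ i) • fderiv ℝ (h γ) x + (D γ).smulRight (h γ x))) x :=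
    HasFDerivAt.fun_sum fun γ hγ => (hD γ).smul (hd γ hγ).hasFDerivAt
  rw [hsum.fderiv]
  have hxk : ‖x‖ ^ k = ‖x‖ * ‖x‖ ^ (k - 1) := by rw [← pow_succ']; congr; omega
  calc _ ≤ ∑ γ ∈ S, ‖(∏ i, x i ^ γ i) • fderiv ℝ (h γ) x + (D γ).smulRight (h γ x)‖ :=
        norm_sum_le _ _
    _ ≤ ∑ γ ∈ S, b * (‖x‖ + k) * ‖x‖ ^ (k - 1) := Finset.sum_le_sum fun γ hγ => ?_
    _ = _ := by rw [Finset.sum_const, nsmul_eq_mul]; ring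
  obtain ⟨hbh, hbh'⟩ := hb γ hγ
  calc _ ≤ ‖(∏ i, x i ^ γ i) • fderiv ℝ (h γ) x‖ + ‖(D γ).smulRight (h γ x)‖ := norm_add_le _ _
    _ ≤ ‖x‖ ^ k * b + k * ‖x‖ ^ (k - 1) * b := by
        gcongr
        · refine (ContinuousLinearMap.opNorm_smul_le _ _).trans ?_
          rw [Real.norm_eq_abs, ← hS γ hγ]
          gcongr
          exact abs_prod_pow_le_norm_pow x γ _
        · rw [ContinuousLinearMap.norm_smulRight_apply, ← hS γ hγ]
          exact mul_le_mul (hDnorm γ) hbh (norm_nonneg _) (by positivity)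
    _ = _ := by rw [hxk]; ring

end Monomial

lemma norm_fderiv_comp_prodMk_le {G E F : Type*} [NormedAddCommGroup G] [NormedSpace ℝ G]
    [NormedAddCommGroup E] [NormedSpace ℝ E] [NormedAddCommGroup F] [NormedSpace ℝ F]
    {f : G × E → F} {t : G} {x : E} (hf : DifferentiableAt ℝ f (t, x)) :
    ‖fderiv ℝ (fun y => f (t, y)) x‖ ≤ ‖fderiv ℝ f (t, x)‖ := by
  have hcomp : HasFDerivAt (fun y => f (t, y)) ((fderiv ℝ f (t, x)).comp (.inr ℝ G E)) x :=
    hf.hasFDerivAt.comp x (hasFDerivAt_prodMk_right t x)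
  rw [hcomp.fderiv]
  exact (ContinuousLinearMap.opNorm_comp_le _ _).trans
    (mul_le_of_le_one_right (norm_nonneg _) (ContinuousLinearMap.norm_inr_le_one ℝ G E))

lemma norm_fderiv_norm_sq_sub_le {E F : Type*} [NormedAddCommGroup E] [NormedSpace ℝ E]
    [NormedAddCommGroup F] [InnerProductSpace ℝ F] {g₀ g₁ : E → F} {x : E}
    (h₀ : DifferentiableAt ℝ g₀ x) (h₁ : DifferentiableAt ℝ g₁ x) :
    ‖fderiv ℝ (fun y => ‖g₁ y‖ ^ 2) x - fderiv ℝ (fun y => ‖g₀ y‖ ^ 2) x‖ ≤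
      2 * (‖g₁ x - g₀ x‖ * ‖fderiv ℝ g₁ x‖ + ‖g₀ x‖ * ‖fderiv ℝ g₁ x - fderiv ℝ g₀ x‖) := by
  rw [h₁.hasFDerivAt.norm_sq.fderiv, h₀.hasFDerivAt.norm_sq.fderiv]
  have : 2 • (innerSL ℝ (g₁ x)).comp (fderiv ℝ g₁ x) -
      2 • (innerSL ℝ (g₀ x)).comp (fderiv ℝ g₀ x) = (2 : ℝ) •
      ((innerSL ℝ (g₁ x - g₀ x)).comp (fderiv ℝ g₁ x) +
        (innerSL ℝ (g₀ x)).comp (fderiv ℝ g₁ x - fderiv ℝ g₀ x)) := by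
    ext v
    simp only [sub_apply, smul_apply,
      add_apply, ContinuousLinearMap.comp_apply, coe_innerSL_apply,
      inner_sub_left, inner_sub_right, nsmul_eq_mul, smul_eq_mul, Nat.cast_ofNat]
    ring
  rw [this, norm_smul, Real.norm_two]
  gcongr
  refine (norm_add_le _ _).trans (add_le_add ?_ ?_) <;>
    exact (ContinuousLinearMap.opNorm_comp_le _ _).trans_eq (by rw [innerSL_apply_norm])

lemma exists_forall_mul_pow_lt_mul_rpow {C β : ℝ} {k : ℕ} (hC : 0 < C) (hβk : β < k) (M : ℝ) :
    ∃ e > 0, ∀ s, 0 < s → s < e → M * s ^ k < C * s ^ β := by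
  have hcont : ContinuousAt (fun s : ℝ => M * s ^ ((k : ℝ) - β)) 0 :=
    continuousAt_const.mul (Real.continuousAt_rpow_const _ _ (Or.inr (sub_nonneg.2 hβk.le)))
  have hsmall : ∀ᶠ s in 𝓝 (0 : ℝ), M * s ^ ((k : ℝ) - β) < C := by
    refine hcont.eventually (gt_mem_nhds ?_)
    beta_reduce
    rwa [Real.zero_rpow (sub_pos.2 hβk).ne', mul_zero]
  obtain ⟨e, he, hball⟩ := Metric.eventually_nhds_iff.mp hsmall
  refine ⟨e, he, fun s hs hse => ?_⟩
  have hsplit : s ^ k = s ^ ((k : ℝ) - β) * s ^ β := by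
    rw [← Real.rpow_add hs, sub_add_cancel, Real.rpow_natCast]
  calc M * s ^ k = M * s ^ ((k : ℝ) - β) * s ^ β := by rw [hsplit, mul_assoc]
    _ < C * s ^ β := mul_lt_mul_of_pos_right
        (hball (by rwa [Real.dist_eq, sub_zero, abs_of_pos hs])) (Real.rpow_pos_of_pos hs β)

lemma AnalyticOnNhd.differentiableAt_comp_prodMk {G E F : Type*} [NormedAddCommGroup G]
    [NormedSpace ℝ G] [NormedAddCommGroup E] [NormedSpace ℝ E] [NormedAddCommGroup F]
    [NormedSpace ℝ F] {g : G × E → F} {W : Set (G × E)} (hg : AnalyticOnNhd ℝ g W) {s : G} {y : E}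
    (hsy : (s, y) ∈ W) : DifferentiableAt ℝ (fun y' => g (s, y')) y :=
  (hg _ hsy).differentiableAt.comp y (hasFDerivAt_prodMk_right s y).differentiableAt

section Family

variable {ι F : Type*} [Fintype ι] [NormedAddCommGroup F] [CompleteSpace F]
  {W : Set (ℝ × EuclideanSpace ℝ ι)} {f : ℝ × EuclideanSpace ℝ ι → F} {δ r : ℝ}

theorem exists_norm_sub_le_of_eq_sum_prod_pow_smul [NormedSpace ℝ F] (hf : AnalyticOnNhd ℝ f W)
    (hK : closedBall (0 : ℝ) δ ×ˢ closedBall 0 r ⊆ W) {k : ℕ} (hk : 1 ≤ k)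
    {S : Finset (ι → ℕ)} (hS : ∀ γ ∈ S, ∑ i, γ i = k) {H : (ι → ℕ) → ℝ × EuclideanSpace ℝ ι → F}
    (hH : ∀ γ ∈ S, AnalyticOnNhd ℝ (H γ) W)
    (hdiff : ∀ t x, (t, x) ∈ W → ((0 : ℝ), x) ∈ W →
      f (t, x) - f (0, x) = ∑ γ ∈ S, (∏ i, x i ^ γ i) • H γ (t, x)) :
    ∃ A, ∀ t x, |t| ≤ δ → ‖x‖ < r → ‖f (t, x) - f (0, x)‖ ≤ A * ‖x‖ ^ k ∧
      ‖fderiv ℝ (fun y => f (t, y)) x - fderiv ℝ (fun y => f (0, y)) x‖ ≤ A * ‖x‖ ^ (k - 1) := by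
  obtain ⟨b, hb⟩ :=
    ((isCompact_closedBall _ _).prod (isCompact_closedBall _ _)).exists_bound_of_continuousOn
    (f := fun z => ∑ γ ∈ S, (‖H γ z‖ + ‖fderiv ℝ (H γ) z‖))
    (continuousOn_finsetSum _ fun γ hγ =>
      ((hH γ hγ).continuousOn.norm.add (hH γ hγ).fderiv.continuousOn.norm).mono hK)
  refine ⟨S.card * b * (r + k), fun t x ht hx => ?_⟩
  have hmem {s : ℝ} {y : EuclideanSpace ℝ ι} (hs : |s| ≤ δ) (hy : ‖y‖ ≤ r) :
      (s, y) ∈ closedBall (0 : ℝ) δ ×ˢ closedBall 0 r :=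
    ⟨mem_closedBall_zero_iff.2 hs, mem_closedBall_zero_iff.2 hy⟩
  have h0 : |(0 : ℝ)| ≤ δ := (abs_zero (α := ℝ)).symm ▸ (abs_nonneg t).trans ht
  have hHb (γ) (hγ : γ ∈ S) : ‖H γ (t, x)‖ ≤ b ∧ ‖fderiv ℝ (H γ) (t, x)‖ ≤ b := by
    have hsum : ‖H γ (t, x)‖ + ‖fderiv ℝ (H γ) (t, x)‖ ≤ b :=
      (Finset.single_le_sum (f := fun γ => ‖H γ (t, x)‖ + ‖fderiv ℝ (H γ) (t, x)‖)
        (fun _ _ => by positivity) hγ).trans ((Real.le_norm_self _).trans (hb _ (hmem ht hx.le)))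
    constructor <;> linarith [norm_nonneg (H γ (t, x)), norm_nonneg (fderiv ℝ (H γ) (t, x))]
  have hb0 : 0 ≤ b := (norm_nonneg _).trans (hb _ (hmem ht hx.le))
  have hφ : (fun y => f (t, y) - f (0, y)) =ᶠ[𝓝 x]
      fun y => ∑ γ ∈ S, (∏ i, y i ^ γ i) • H γ (t, y) := by
    filter_upwards [isOpen_ball.mem_nhds (mem_ball_zero_iff.mpr hx)] with y hy
    have hy : ‖y‖ ≤ r := (mem_ball_zero_iff.mp hy).le
    exact hdiff t y (hK (hmem ht hy)) (hK (hmem h0 hy))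
  constructor
  · rw [hφ.eq_of_nhds]
    refine (norm_sum_prod_pow_smul_le hS x _ fun γ hγ => (hHb γ hγ).1).trans ?_
    refine mul_le_mul_of_nonneg_right (le_mul_of_one_le_right (by positivity) ?_) (by positivity)
    linarith [(norm_nonneg x).trans hx.le, (Nat.one_le_cast (α := ℝ)).2 hk]
  · rw [← fderiv_fun_sub (hf.differentiableAt_comp_prodMk (hK (hmem ht hx.le)))
      (hf.differentiableAt_comp_prodMk (hK (hmem h0 hx.le))), hφ.fderiv_eq]
    refine (norm_fderiv_sum_prod_pow_smul_le hk hS (h := fun γ y => H γ (t, y))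
      (fun γ hγ => (hH γ hγ).differentiableAt_comp_prodMk (hK (hmem ht hx.le)))
      fun γ hγ => ⟨(hHb γ hγ).1,
        (norm_fderiv_comp_prodMk_le (hH γ hγ _ (hK (hmem ht hx.le))).differentiableAt).trans
          (hHb γ hγ).2⟩).trans ?_
    gcongr

theorem exists_norm_fderiv_norm_sq_sub_le [InnerProductSpace ℝ F] (hf : AnalyticOnNhd ℝ f W)
    (hf00 : f (0, 0) = 0) (hK : closedBall (0 : ℝ) δ ×ˢ closedBall 0 r ⊆ W) {k : ℕ} (hk : 1 ≤ k)
    {S : Finset (ι → ℕ)} (hS : ∀ γ ∈ S, ∑ i, γ i = k) {H : (ι → ℕ) → ℝ × EuclideanSpace ℝ ι → F}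
    (hH : ∀ γ ∈ S, AnalyticOnNhd ℝ (H γ) W)
    (hdiff : ∀ t x, (t, x) ∈ W → ((0 : ℝ), x) ∈ W →
      f (t, x) - f (0, x) = ∑ γ ∈ S, (∏ i, x i ^ γ i) • H γ (t, x)) :
    ∃ M, ∀ t x, |t| ≤ δ → ‖x‖ < r →
      ‖fderiv ℝ (fun y => ‖f (t, y)‖ ^ 2) x - fderiv ℝ (fun y => ‖f (0, y)‖ ^ 2) x‖ ≤
        M * ‖x‖ ^ k := by
  obtain ⟨A, hA⟩ := exists_norm_sub_le_of_eq_sum_prod_pow_smul hf hK hk hS hH hdiff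
  obtain ⟨B, hB⟩ := ((isCompact_closedBall _ _).prod
    (isCompact_closedBall _ _)).exists_bound_of_continuousOn (hf.fderiv.continuousOn.mono hK)
  refine ⟨2 * (A * B + B * A), fun t x ht hx => ?_⟩
  have hmem {s : ℝ} {y : EuclideanSpace ℝ ι} (hs : |s| ≤ δ) (hy : ‖y‖ ≤ r) :
      (s, y) ∈ closedBall (0 : ℝ) δ ×ˢ closedBall 0 r :=
    ⟨mem_closedBall_zero_iff.2 hs, mem_closedBall_zero_iff.2 hy⟩
  have h0 : |(0 : ℝ)| ≤ δ := (abs_zero (α := ℝ)).symm ▸ (abs_nonneg t).trans ht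
  have hpartial {s : ℝ} {y : EuclideanSpace ℝ ι} (hs : |s| ≤ δ) (hy : ‖y‖ ≤ r) :
      ‖fderiv ℝ (fun y' => f (s, y')) y‖ ≤ B :=
    (norm_fderiv_comp_prodMk_le (hf _ (hK (hmem hs hy))).differentiableAt).trans
      (hB _ (hmem hs hy))
  have hf0x : ‖f (0, x)‖ ≤ B * ‖x‖ := by
    simpa [hf00] using Convex.norm_image_sub_le_of_norm_fderiv_le (f := fun y => f (0, y))
      (fun y hy => hf.differentiableAt_comp_prodMk (hK (hmem h0 (mem_closedBall_zero_iff.mp hy))))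
      (fun y hy => hpartial h0 (mem_closedBall_zero_iff.mp hy)) (convex_closedBall 0 r)
      (mem_closedBall_self ((norm_nonneg x).trans hx.le)) (mem_closedBall_zero_iff.mpr hx.le)
  have hB0 : 0 ≤ B := (norm_nonneg _).trans (hpartial ht hx.le)
  obtain ⟨hval, hder⟩ := hA t x ht hx
  calc _ ≤ 2 * (‖f (t, x) - f (0, x)‖ * ‖fderiv ℝ (fun y => f (t, y)) x‖ +
        ‖f (0, x)‖ * ‖fderiv ℝ (fun y => f (t, y)) x - fderiv ℝ (fun y => f (0, y)) x‖) :=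
      norm_fderiv_norm_sq_sub_le (hf.differentiableAt_comp_prodMk (hK (hmem h0 hx.le)))
        (hf.differentiableAt_comp_prodMk (hK (hmem ht hx.le)))
    _ ≤ 2 * (A * ‖x‖ ^ k * B + B * ‖x‖ * (A * ‖x‖ ^ (k - 1))) := by
      gcongr
      · exact (norm_nonneg _).trans hval
      · exact hpartial ht hx.le
    _ = _ := by
      rw [show ‖x‖ ^ k = ‖x‖ * ‖x‖ ^ (k - 1) by rw [← pow_succ']; congr; omega]
      ring

end Family

theorem uniform_regular_value_general {n p : ℕ}
    (W : Set (ℝ × EuclideanSpace ℝ (Fin n))) (hWo : IsOpen W)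
    (hW0 : ((0:ℝ), (0 : EuclideanSpace ℝ (Fin n))) ∈ W)
    (f : ℝ × EuclideanSpace ℝ (Fin n) → EuclideanSpace ℝ (Fin p))
    (hf : AnalyticOnNhd ℝ f W)
    (hf0 : ∀ t : ℝ, (t, (0 : EuclideanSpace ℝ (Fin n))) ∈ W → f (t, 0) = 0)
    (U : Set (EuclideanSpace ℝ (Fin n))) (hU : U ∈ nhds 0)
    -- Lojasiewicz inequality for the gradient of `‖f₀‖²`:
    (C ε₁ β : ℝ) (hC : 0 < C) (hε₁ : 0 < ε₁)
    (hLoj : ∀ x ∈ U, ‖x‖ < ε₁ →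
      C * ‖x‖ ^ β ≤ ‖fderiv ℝ (fun y : EuclideanSpace ℝ (Fin n) => ‖f (0, y)‖ ^ 2) x‖)
    -- `f_t - f₀` lies in the `k`-th power of the ideal `(x₁, …, xₙ)`:
    (k : ℕ) (hk : ⌊β⌋₊ + 1 ≤ k)
    (S : Finset (Fin n → ℕ)) (hS : ∀ γ ∈ S, ∑ i, γ i = k)
    (H : (Fin n → ℕ) → ℝ × EuclideanSpace ℝ (Fin n) → EuclideanSpace ℝ (Fin p))
    (hH : ∀ γ ∈ S, AnalyticOnNhd ℝ (H γ) W)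
    (hdiff : ∀ (t : ℝ) (x : EuclideanSpace ℝ (Fin n)), (t, x) ∈ W → ((0:ℝ), x) ∈ W →
      f (t, x) - f (0, x) = ∑ γ ∈ S, (∏ i, x i ^ γ i) • H γ (t, x)) :
    ∃ δ > (0:ℝ), ∃ ε' > (0:ℝ),
      (∀ t : ℝ, |t| < δ → ∀ x : EuclideanSpace ℝ (Fin n), ‖x‖ < ε' →
        fderiv ℝ (fun y : EuclideanSpace ℝ (Fin n) => ‖f (t, y)‖ ^ 2) x = 0 → x = 0) ∧
      ∃ ε₀ > (0:ℝ), ∀ ε : ℝ, 0 < ε → ε ≤ ε₀ → ∀ t : ℝ, |t| < δ →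
        ∀ x : EuclideanSpace ℝ (Fin n), ‖x‖ < ε' → ‖f (t, x)‖ ^ 2 = ε →
          fderiv ℝ (fun y : EuclideanSpace ℝ (Fin n) => ‖f (t, y)‖ ^ 2) x ≠ 0 := by
  obtain ⟨ρ, hρ, hρW⟩ := nhds_basis_closedBall.mem_iff.mp (hWo.mem_nhds hW0)
  obtain ⟨r₀, hr₀, hr₀U⟩ := Metric.mem_nhds_iff.mp hU
  set r := min ρ (min r₀ ε₁)
  have hK : closedBall (0 : ℝ) ρ ×ˢ closedBall 0 r ⊆ W :=
    (prod_mono subset_rfl (closedBall_subset_closedBall (min_le_left _ _))).trans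
      (closedBall_prod_same (0 : ℝ) (0 : EuclideanSpace ℝ (Fin n)) ρ ▸ hρW)
  obtain ⟨M, hM⟩ :=
    exists_norm_fderiv_norm_sq_sub_le hf (hf0 0 hW0) hK (le_add_self.trans hk) hS hH hdiff
  obtain ⟨e, he, hMC⟩ := exists_forall_mul_pow_lt_mul_rpow hC
    ((Nat.lt_floor_add_one β).trans_le (by exact_mod_cast hk)) M
  have hcrit : ∀ t : ℝ, |t| < ρ → ∀ x : EuclideanSpace ℝ (Fin n), ‖x‖ < min r e →
      fderiv ℝ (fun y : EuclideanSpace ℝ (Fin n) => ‖f (t, y)‖ ^ 2) x = 0 → x = 0 := by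
    intro t ht x hx hx0
    by_contra hne
    obtain ⟨hxr, hxe⟩ := lt_min_iff.mp hx
    obtain ⟨-, hxr₀, hxε₁⟩ := (lt_min_iff.mp hxr).imp_right lt_min_iff.mp
    have hMx := hM t x ht.le hxr
    rw [hx0, zero_sub, norm_neg] at hMx
    exact (hMC ‖x‖ (norm_pos_iff.mpr hne) hxe).not_ge
      ((hLoj x (hr₀U (mem_ball_zero_iff.mpr hxr₀)) hxε₁).trans hMx)
  refine ⟨ρ, hρ, min r e, lt_min (by positivity) he, hcrit, 1, one_pos, ?_⟩
  rintro ε hε - t ht x hx hval hx0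
  obtain rfl := hcrit t ht x hx hx0
  rw [hf0 t (hK ⟨mem_closedBall_zero_iff.2 ht.le, mem_closedBall_self (by positivity)⟩),
    norm_zero] at hval
  exact hε.ne (by simpa using hval)

/-- Uniform regular value: let `F (t, x) = (t, f (t, x))` be a real analytic
family on a neighborhood `W` of `0` in `ℝ × ℝⁿ` with values in `ℝ × ℝᵖ`, `f (t, 0) = 0`,
such that `f₀ = f (0, ·)` has isolated singularity at `0` (injective and immersive away
from `0` on a neighborhood `U` of `0`).  Suppose the gradient of `‖f₀‖²` satisfies the
Lojasiewicz inequality `‖∇(‖f₀‖²) (x)‖ ≥ C ‖x‖ ^ β` near `0`, and that `k ≥ ⌊β⌋ + 1` and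
each component of `f (t, x) - f (0, x)` can be written as `∑_{|γ| = k} x ^ γ • H_γ (t, x)`
with `H_γ` real analytic.  Then there are `δ, ε' > 0` such that for `|t| < δ` the only
critical point of `x ↦ ‖f (t, x)‖²` in `{‖x‖ < ε'}` is `x = 0`; in particular there is
`ε₀ > 0` such that every `0 < ε ≤ ε₀` is a regular value of `‖f (t, ·)‖²` on that ball,
for all `|t| < δ`. -/
theorem uniform_regular_value {n p : ℕ}
    (W : Set (ℝ × EuclideanSpace ℝ (Fin n))) (hWo : IsOpen W)
    (hW0 : ((0:ℝ), (0 : EuclideanSpace ℝ (Fin n))) ∈ W)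
    (f : ℝ × EuclideanSpace ℝ (Fin n) → EuclideanSpace ℝ (Fin p))
    (hf : AnalyticOnNhd ℝ f W)
    (hf0 : ∀ t : ℝ, (t, (0 : EuclideanSpace ℝ (Fin n))) ∈ W → f (t, 0) = 0)
    -- `f₀` has isolated singularity at `0`:
    (U : Set (EuclideanSpace ℝ (Fin n))) (hU : U ∈ nhds 0)
    (hUW : ∀ x ∈ U, ((0:ℝ), x) ∈ W)
    (hinj : Set.InjOn (fun x => f (0, x)) U)
    (himm : ∀ x ∈ U, x ≠ 0 →
      Function.Injective (fderiv ℝ (fun y : EuclideanSpace ℝ (Fin n) => f (0, y)) x))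
    -- Lojasiewicz inequality for the gradient of `‖f₀‖²`:
    (C ε₁ β : ℝ) (hC : 0 < C) (hε₁ : 0 < ε₁) (hβ : 0 < β)
    (hLoj : ∀ x ∈ U, ‖x‖ < ε₁ →
      C * ‖x‖ ^ β ≤ ‖fderiv ℝ (fun y : EuclideanSpace ℝ (Fin n) => ‖f (0, y)‖ ^ 2) x‖)
    -- `f_t - f₀` lies in the `k`-th power of the ideal `(x₁, …, xₙ)`:
    (k : ℕ) (hk : ⌊β⌋₊ + 1 ≤ k)
    (S : Finset (Fin n → ℕ)) (hS : ∀ γ ∈ S, ∑ i, γ i = k)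
    (H : (Fin n → ℕ) → ℝ × EuclideanSpace ℝ (Fin n) → EuclideanSpace ℝ (Fin p))
    (hH : ∀ γ ∈ S, AnalyticOnNhd ℝ (H γ) W)
    (hdiff : ∀ (t : ℝ) (x : EuclideanSpace ℝ (Fin n)), (t, x) ∈ W → ((0:ℝ), x) ∈ W →
      f (t, x) - f (0, x) = ∑ γ ∈ S, (∏ i, x i ^ γ i) • H γ (t, x)) :
    ∃ δ > (0:ℝ), ∃ ε' > (0:ℝ),
      (∀ t : ℝ, |t| < δ → ∀ x : EuclideanSpace ℝ (Fin n), ‖x‖ < ε' →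
        fderiv ℝ (fun y : EuclideanSpace ℝ (Fin n) => ‖f (t, y)‖ ^ 2) x = 0 → x = 0) ∧
      ∃ ε₀ > (0:ℝ), ∀ ε : ℝ, 0 < ε → ε ≤ ε₀ → ∀ t : ℝ, |t| < δ →
        ∀ x : EuclideanSpace ℝ (Fin n), ‖x‖ < ε' → ‖f (t, x)‖ ^ 2 = ε →
          fderiv ℝ (fun y : EuclideanSpace ℝ (Fin n) => ‖f (t, y)‖ ^ 2) x ≠ 0 :=
  uniform_regular_value_general W hWo hW0 f hf hf0 U hU C ε₁ β hC hε₁ hLoj k hk S hS H hH hdiff
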